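/- arXiv:1612.08587 — 2 statements merged into one kernel-verified Lean document; each statement's English description precedes it below -/
import Mathlib

section
/- There exists a constant C such that for every positive lattice point k ∈ ℤ², Σ_{h positive, h ≠ k} [ ( (h⊥·k)(k·h)/|k|² − (h⊥·k)/2 )² / ( |h|⁴ |k−h|⁴ ) ] ≤ C, where the sum ranges over all positive lattice points h ∈ ℤ² with h ≠ k. -/
/-- A lattice point k = (k₁,k₂) ∈ ℤ² is positive if k₁ > 0, or k₁ = 0 and k₂ > 0. -/
def PosLat (k : ℤ × ℤ) : Prop := 0 < k.1 ∨ (k.1 = 0 ∧ 0 < k.2)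

/-- h⊥ := (−h₂, h₁). -/
def perp (h : ℤ × ℤ) : ℤ × ℤ := (-h.2, h.1)

/-- Euclidean inner product on ℤ². -/
def zdot (a b : ℤ × ℤ) : ℤ := a.1 * b.1 + a.2 * b.2

noncomputable def glat : ℤ × ℤ → ℝ := fun m => 1 / (((m.1 : ℝ)) ^ 2 + ((m.2 : ℝ)) ^ 2) ^ 2

lemma glat_nonneg (m : ℤ × ℤ) : 0 ≤ glat m := by unfold glat; positivity

lemma one_le_sq_sum {m : ℤ × ℤ} (hm : m ≠ 0) : (1 : ℝ) ≤ (m.1 : ℝ) ^ 2 + (m.2 : ℝ) ^ 2 := by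
  have h : (1 : ℤ) ≤ m.1 ^ 2 + m.2 ^ 2 := by
    rcases eq_or_ne m.1 0 with h1 | h1
    · have h2 : m.2 ≠ 0 := by
        intro h2; exact hm (Prod.ext h1 h2)
      nlinarith [Int.one_le_abs h2, sq_abs m.2, sq_nonneg m.1]
    · nlinarith [Int.one_le_abs h1, sq_abs m.1, sq_nonneg m.2]
  calc (1:ℝ) = ((1:ℤ):ℝ) := by norm_num
  _ ≤ ((m.1 ^ 2 + m.2 ^ 2 : ℤ) : ℝ) := by exact_mod_cast Int.cast_le.mpr h
  _ = (m.1 : ℝ) ^ 2 + (m.2 : ℝ) ^ 2 := by push_cast; ring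

lemma summable_aux_int : Summable (fun a : ℤ => ((a : ℝ) ^ 2 + 1)⁻¹) := by
  have h1 : Summable (fun n : ℕ => 1 / ((n : ℝ) + 1) ^ 2) := by
    have h := (summable_nat_add_iff (f := fun n : ℕ => 1 / (n : ℝ) ^ 2) 1).2
      (Real.summable_one_div_nat_pow.2 one_lt_two)
    exact h.congr fun n => by push_cast; ring
  have hnat : Summable (fun n : ℕ => ((n : ℝ) ^ 2 + 1)⁻¹) := by
    refine Summable.of_nonneg_of_le (fun n => by positivity) (fun n => ?_) (h1.mul_left 2)
    rw [inv_eq_one_div, mul_one_div, div_le_div_iff₀ (by positivity) (by positivity)]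
    nlinarith [sq_nonneg ((n : ℝ) - 1)]
  exact Summable.of_nat_of_neg
    (hnat.congr fun n => by push_cast; ring)
    (hnat.congr fun n => by push_cast; ring)

lemma summable_glat : Summable glat := by
  have hprod : Summable (fun m : ℤ × ℤ => ((m.1 : ℝ) ^ 2 + 1)⁻¹ * ((m.2 : ℝ) ^ 2 + 1)⁻¹) :=
    summable_aux_int.mul_of_nonneg summable_aux_int (fun a => by positivity) (fun a => by positivity)
  refine Summable.of_nonneg_of_le glat_nonneg (fun m => ?_) (hprod.mul_left 4)
  rcases eq_or_ne m 0 with rfl | hm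
  · simp [glat]
  · have h1 := one_le_sq_sum hm
    unfold glat
    have e : 4 * (((m.1 : ℝ) ^ 2 + 1)⁻¹ * ((m.2 : ℝ) ^ 2 + 1)⁻¹)
        = 4 / (((m.1 : ℝ) ^ 2 + 1) * ((m.2 : ℝ) ^ 2 + 1)) := by
      rw [← mul_inv]; ring
    rw [e, div_le_div_iff₀ (by positivity) (by positivity)]
    nlinarith [sq_nonneg (m.1 : ℝ), sq_nonneg (m.2 : ℝ), sq_nonneg ((m.1:ℝ)^2 + (m.2:ℝ)^2),
      mul_nonneg (sub_nonneg.2 h1) (sq_nonneg (m.1:ℝ)),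
      mul_nonneg (sub_nonneg.2 h1) (sq_nonneg (m.2:ℝ)),
      mul_nonneg (sub_nonneg.2 h1) (sub_nonneg.2 h1)]

lemma cauchy2 (p q r s : ℝ) : (p * s - q * r) ^ 2 ≤ (p ^ 2 + q ^ 2) * (r ^ 2 + s ^ 2) := by
  nlinarith [sq_nonneg (p * r + q * s)]

lemma pointwise_bound (A B K H M : ℝ) (hK : 1 ≤ K) (hH : 1 ≤ H) (hM : 1 ≤ M)
    (hAB : A ^ 2 + B ^ 2 = H * K) (hA : A ^ 2 ≤ H * M) :
    (A * B / K - A / 2) ^ 2 / (H ^ 2 * M ^ 2) ≤ 1 / H ^ 2 + 1 / M ^ 2 := by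
  have hK0 : (0:ℝ) < K := lt_of_lt_of_le one_pos hK
  have hH0 : (0:ℝ) < H := lt_of_lt_of_le one_pos hH
  have hM0 : (0:ℝ) < M := lt_of_lt_of_le one_pos hM
  have e1 : A * B / K - A / 2 = A * (2 * B - K) / (2 * K) := by field_simp
  rw [e1, div_pow, div_div, div_le_iff₀ (by positivity)]
  have e2 : (1 / H ^ 2 + 1 / M ^ 2) * ((2 * K) ^ 2 * (H ^ 2 * M ^ 2))
      = 4 * K ^ 2 * (M ^ 2 + H ^ 2) := by field_simp; ring
  rw [e2]
  nlinarith [mul_nonneg (sq_nonneg A) (sq_nonneg (2 * B + K)),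
    sq_nonneg (A ^ 2 - B ^ 2),
    mul_le_mul_of_nonneg_right hA (sq_nonneg K),
    mul_nonneg (sq_nonneg (H - M)) (sq_nonneg K)]

lemma poslat_ne_zero {h : ℤ × ℤ} (hh : PosLat h) : h ≠ 0 := by
  intro e
  subst e
  simp [PosLat] at hh

lemma one_le_zdot_self {m : ℤ × ℤ} (hm : m ≠ 0) : (1 : ℝ) ≤ (zdot m m : ℝ) := by
  have := one_le_sq_sum hm
  have e : ((zdot m m : ℤ) : ℝ) = (m.1 : ℝ) ^ 2 + (m.2 : ℝ) ^ 2 := by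
    simp [zdot]; push_cast; ring
  linarith [e ▸ this]

lemma glat_eq (m : ℤ × ℤ) : glat m = 1 / (zdot m m : ℝ) ^ 2 := by
  have e : ((zdot m m : ℤ) : ℝ) = (m.1 : ℝ) ^ 2 + (m.2 : ℝ) ^ 2 := by
    simp [zdot]; push_cast; ring
  rw [glat, e]

/-- there is a constant C such that for every positive lattice point k,
Σ_{h positive, h ≠ k} ((h⊥·k)(k·h)/|k|² − (h⊥·k)/2)² / (|h|⁴ |k−h|⁴) ≤ C. -/
theorem euler_coefficient_bound :
    ∃ C : ℝ, ∀ k : ℤ × ℤ, PosLat k →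
      (∑' h : {h : ℤ × ℤ // PosLat h ∧ h ≠ k},
        ((zdot (perp h.1) k : ℝ) * (zdot k h.1 : ℝ) / (zdot k k : ℝ)
            - (zdot (perp h.1) k : ℝ) / 2) ^ 2
          / ((zdot h.1 h.1 : ℝ) ^ 2 * (zdot (k - h.1) (k - h.1) : ℝ) ^ 2))
        ≤ C := by
  refine ⟨2 * ∑' m : ℤ × ℤ, glat m, fun k hk => ?_⟩
  have hk0 : k ≠ 0 := poslat_ne_zero hk
  set F : {h : ℤ × ℤ // PosLat h ∧ h ≠ k} → ℝ := fun h =>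
    ((zdot (perp h.1) k : ℝ) * (zdot k h.1 : ℝ) / (zdot k k : ℝ)
        - (zdot (perp h.1) k : ℝ) / 2) ^ 2
      / ((zdot h.1 h.1 : ℝ) ^ 2 * (zdot (k - h.1) (k - h.1) : ℝ) ^ 2) with hF
  have hpt : ∀ h : {h : ℤ × ℤ // PosLat h ∧ h ≠ k}, F h ≤ glat h.1 + glat (k - h.1) := by
    intro h
    have hH1 : (1 : ℝ) ≤ (zdot h.1 h.1 : ℝ) := one_le_zdot_self (poslat_ne_zero h.2.1)
    have hM1 : (1 : ℝ) ≤ (zdot (k - h.1) (k - h.1) : ℝ) :=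
      one_le_zdot_self (sub_ne_zero.mpr (Ne.symm h.2.2))
    have hK1 : (1 : ℝ) ≤ (zdot k k : ℝ) := one_le_zdot_self hk0
    have hAB : (zdot (perp h.1) k : ℝ) ^ 2 + (zdot k h.1 : ℝ) ^ 2
        = (zdot h.1 h.1 : ℝ) * (zdot k k : ℝ) := by
      simp [zdot, perp]; push_cast; ring
    have hA : (zdot (perp h.1) k : ℝ) ^ 2
        ≤ (zdot h.1 h.1 : ℝ) * (zdot (k - h.1) (k - h.1) : ℝ) := by
      have hc := cauchy2 (h.1.1 : ℝ) (h.1.2 : ℝ) ((k.1 : ℝ) - h.1.1) ((k.2 : ℝ) - h.1.2)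
      have e1 : (zdot (perp h.1) k : ℝ)
          = (h.1.1 : ℝ) * ((k.2 : ℝ) - h.1.2) - (h.1.2 : ℝ) * ((k.1 : ℝ) - h.1.1) := by
        simp [zdot, perp]; push_cast; ring
      have e2 : (zdot h.1 h.1 : ℝ) = (h.1.1 : ℝ) ^ 2 + (h.1.2 : ℝ) ^ 2 := by
        simp [zdot]; push_cast; ring
      have e3 : (zdot (k - h.1) (k - h.1) : ℝ)
          = ((k.1 : ℝ) - h.1.1) ^ 2 + ((k.2 : ℝ) - h.1.2) ^ 2 := by
        simp [zdot, Prod.fst_sub, Prod.snd_sub]; push_cast; ring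
      rw [e1, e2, e3]; exact hc
    have := pointwise_bound _ _ _ _ _ hK1 hH1 hM1 hAB hA
    rw [hF, glat_eq, glat_eq]
    exact this
  have hFnn : ∀ h, 0 ≤ F h := fun h => div_nonneg (sq_nonneg _) (by positivity)
  have hinj2 : Function.Injective (fun h : {h : ℤ × ℤ // PosLat h ∧ h ≠ k} => k - h.1) := by
    intro x y e
    exact Subtype.ext (by have := sub_right_injective e; exact this)
  have hs1 : Summable (fun h : {h : ℤ × ℤ // PosLat h ∧ h ≠ k} => glat h.1) :=
    summable_glat.comp_injective Subtype.val_injective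
  have hs2 : Summable (fun h : {h : ℤ × ℤ // PosLat h ∧ h ≠ k} => glat (k - h.1)) :=
    summable_glat.comp_injective hinj2
  have hb : Summable (fun h : {h : ℤ × ℤ // PosLat h ∧ h ≠ k} => glat h.1 + glat (k - h.1)) :=
    hs1.add hs2
  have hFs : Summable F := Summable.of_nonneg_of_le hFnn hpt hb
  calc ∑' h, F h ≤ ∑' h : {h : ℤ × ℤ // PosLat h ∧ h ≠ k}, (glat h.1 + glat (k - h.1)) :=
        Summable.tsum_le_tsum hpt hFs hb
    _ = (∑' h : {h : ℤ × ℤ // PosLat h ∧ h ≠ k}, glat h.1)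
        + ∑' h : {h : ℤ × ℤ // PosLat h ∧ h ≠ k}, glat (k - h.1) := Summable.tsum_add hs1 hs2
    _ ≤ (∑' m : ℤ × ℤ, glat m) + ∑' m : ℤ × ℤ, glat m := by
        gcongr
        · exact Summable.tsum_le_tsum_of_inj _ Subtype.val_injective (fun c _ => glat_nonneg c)
            (fun i => le_rfl) hs1 summable_glat
        · exact Summable.tsum_le_tsum_of_inj _ hinj2 (fun c _ => glat_nonneg c)
            (fun i => le_rfl) hs2 summable_glat
    _ = 2 * ∑' m : ℤ × ℤ, glat m := by ring
end

section
/- Fix L > 0 and R = (R₁,R₂) ∈ ℕ², let Λ := {k ∈ ℤ² : k positive, k₁ < L R₁, k₂ < L R₂}, and regard the truncated Euler vector field B^{L,R} as a smooth vector field on ℝ^{2|Λ|} via the real coordinates φ_k = x_k + i y_k, k ∈ Λ. Then its Euclidean divergence vanishes identically: Σ_{k∈Λ} ( ∂(Re B_k^{L,R})/∂x_k + ∂(Im B_k^{L,R})/∂y_k )(φ) = 0 for every φ. -/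
open Complex
open scoped Classical

/-- Euclidean norm of a lattice point. -/
noncomputable def knorm (k : ℤ × ℤ) : ℝ := Real.sqrt ((k.1 : ℝ) ^ 2 + (k.2 : ℝ) ^ 2)

/-- The coefficients α_{h,k}^L of the Euler nonlinearity. -/
noncomputable def alphaL (L : ℝ) (h k : ℤ × ℤ) : ℝ :=
  (1 / L) * (2 * Real.pi / L) ^ 2 *
    ((zdot (perp h) k : ℝ) * (zdot k h : ℝ) / (zdot k k : ℝ) - (zdot (perp h) k : ℝ) / 2)

/-- The truncation set Λ = {k positive : k₁ < L R₁, k₂ < L R₂}. -/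
def lamSet (L : ℝ) (R₁ R₂ : ℕ) : Set (ℤ × ℤ) :=
  {k | PosLat k ∧ (k.1 : ℝ) < L * R₁ ∧ (k.2 : ℝ) < L * R₂}

/-- Extension of φ : Λ → ℂ to ℤ² by φ_{−k} := conj(φ_k) for k ∈ Λ and 0 off Λ ∪ (−Λ). -/
noncomputable def extCoeff (S : Set (ℤ × ℤ)) (φ : S → ℂ) (j : ℤ × ℤ) : ℂ :=
  if h : j ∈ S then φ ⟨j, h⟩
  else if h' : -j ∈ S then (starRingEnd ℂ) (φ ⟨-j, h'⟩) else 0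

/-- The truncated Euler vector field B_k^{L,R}(φ) = Σ_{h ∈ Λ, h ≠ k} α_{h,k}^L φ_h φ_{k−h}. -/
noncomputable def BGal (L : ℝ) (S : Set (ℤ × ℤ)) (k : ℤ × ℤ) (φ : S → ℂ) : ℂ :=
  ∑' h : {h : ℤ × ℤ // h ∈ S ∧ h ≠ k},
    (alphaL L h.1 k : ℂ) * extCoeff S φ h.1 * extCoeff S φ (k - h.1)

theorem PosLat.ne_zero {j : ℤ × ℤ} (hj : PosLat j) : j ≠ 0 := by
  rintro rfl
  rcases hj with h | ⟨_, h⟩ <;> exact lt_irrefl 0 h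

theorem PosLat.not_neg {j : ℤ × ℤ} (hj : PosLat j) : ¬ PosLat (-j) := by
  unfold PosLat at *
  simp only [Prod.fst_neg, Prod.snd_neg]
  omega

theorem alphaL_two_mul_self (L : ℝ) (k : ℤ × ℤ) : alphaL L (k + k) k = 0 := by
  have hperp : zdot (perp (k + k)) k = 0 := by
    simp only [zdot, perp, Prod.fst_add, Prod.snd_add]
    ring
  simp [alphaL, hperp]

theorem extCoeff_update_of_ne {S : Set (ℤ × ℤ)} (φ : S → ℂ) (k : S) (v : ℂ) {j : ℤ × ℤ}
    (hj : j ≠ k) (hnj : -j ≠ k) :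
    extCoeff S (Function.update φ k v) j = extCoeff S φ j := by
  unfold extCoeff
  split_ifs with hjS hnjS
  · exact Function.update_of_ne (fun e => hj (congrArg Subtype.val e)) _ _
  · rw [Function.update_of_ne (fun e => hnj (congrArg Subtype.val e))]
  · rfl

/-- On a set of positive modes, `B_k` does not depend on `φ_k`: the only term of `B_k` that
could involve `φ_k` is `h = 2k` (through `φ_{k-h} = conj φ_k`), and `α_{2k,k} = 0`. -/
theorem BGal_update_self {S : Set (ℤ × ℤ)} (hS : ∀ j ∈ S, PosLat j) (L : ℝ) (φ : S → ℂ)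
    (k : S) (v : ℂ) :
    BGal L S k (Function.update φ k v) = BGal L S k φ := by
  refine tsum_congr fun ⟨h, hhS, hhk⟩ => ?_
  by_cases h2k : h = k.1 + k.1
  · simp [h2k, alphaL_two_mul_self]
  have hkpos := hS k k.2
  have hhpos := hS h hhS
  have hh : extCoeff S (Function.update φ k v) h = extCoeff S φ h :=
    extCoeff_update_of_ne φ k v hhk fun e => hkpos.not_neg (by rw [← e, neg_neg]; exact hhpos)
  have hkh : extCoeff S (Function.update φ k v) (k - h) = extCoeff S φ (k - h) := by
    refine extCoeff_update_of_ne φ k v (fun e => hhpos.ne_zero ?_) (fun e => h2k ?_)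
    · simpa using e
    · rw [neg_sub] at e
      exact sub_eq_iff_eq_add.mp e
  simp only [hh, hkh]

theorem truncated_euler_divergence_free_general
    (L : ℝ) (R₁ R₂ : ℕ) (φ : lamSet L R₁ R₂ → ℂ) :
    (∑' k : lamSet L R₁ R₂,
      (deriv (fun s : ℝ =>
          (BGal L (lamSet L R₁ R₂) k.1 (Function.update φ k (φ k + s))).re) 0
        + deriv (fun s : ℝ =>
          (BGal L (lamSet L R₁ R₂) k.1 (Function.update φ k (φ k + s * Complex.I))).im) 0))
      = 0 := by
  have hpos : ∀ j ∈ lamSet L R₁ R₂, PosLat j := fun _ hj => hj.1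
  simp only [BGal_update_self hpos, deriv_const, add_zero, tsum_zero]

/-- the truncated Euler vector field, viewed in the real coordinates
φ_k = x_k + i y_k, has vanishing Euclidean divergence:
Σ_{k∈Λ} (∂(Re B_k)/∂x_k + ∂(Im B_k)/∂y_k)(φ) = 0 for every φ. -/
theorem truncated_euler_divergence_free
    (L : ℝ) (hL : 0 < L) (R₁ R₂ : ℕ) (φ : lamSet L R₁ R₂ → ℂ) :
    (∑' k : lamSet L R₁ R₂,
      (deriv (fun s : ℝ =>
          (BGal L (lamSet L R₁ R₂) k.1 (Function.update φ k (φ k + s))).re) 0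
        + deriv (fun s : ℝ =>
          (BGal L (lamSet L R₁ R₂) k.1 (Function.update φ k (φ k + s * Complex.I))).im) 0))
      = 0 :=
  truncated_euler_divergence_free_general L R₁ R₂ φ
end
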